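/- Let 𝒞 be a quasi-similar Cantor set and f_s its associated non-decreasing singular function. If x < y in [0,1) satisfy y − x ≤ 1/(k_1⋯k_n), then f_s(y) − f_s(x) ≤ 1/(m_1⋯m_n). -/

import Mathlib

/-!
`fₙ` is the distribution function of the measure `μₙ` with density `(k₁⋯kₙ)/(m₁⋯mₙ)` on `Aₙ`.
For `N ≥ n` every interval of `Aₙ` has `μ_N`-mass exactly `1/(m₁⋯mₙ)`, by downward induction
on `n`: an interval of `Aₙ` meets `A_{n+1}` in `m_{n+1}` intervals of `A_{n+1}`. Left endpoints
of distinct intervals of `Aₙ` are at least `2/(k₁⋯kₙ)` apart, so the gaps are at least as long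
as the intervals and `(x, y]` with `y - x ≤ 1/(k₁⋯kₙ)` meets at most one of them outside an
endpoint; hence `f_N(y) - f_N(x) ≤ 1/(m₁⋯mₙ)`. The same count with `x = y` and `n = N` gives
`|f_N - f_{N+1}| ≤ 1/(m₁⋯m_N) ≤ 2^{-N}`, so `f_N → f_s` and the bound passes to the limit.
-/

open scoped Classical
open MeasureTheory

/-- The data of a quasi-similar Cantor set construction with parameters `(kᵢ)`, `(mᵢ)`
(indexed from `1`), `2 ≤ mᵢ ≤ ⌊kᵢ/2⌋`.  `ends n` is the (finite) set of left endpoints of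
the `m₁⋯mₙ` closed intervals, each of length `1/(k₁⋯kₙ)`, forming the `n`-th stage `Aₙ`
(`ends 0 = {0}`, the interval `[0,1]`).  At each stage every interval is divided into
`k_{n+1}` equal parts of which `m_{n+1}` are selected according to a fixed pattern
`off (n+1)` of offsets (the same configuration in each interval), including the first and
the last subinterval, with pairwise disjoint closures. -/
structure QSCantor where
  k : ℕ → ℕ
  m : ℕ → ℕ
  ends : ℕ → Finset ℝ
  off : ℕ → Finset ℝ
  two_le_m : ∀ i, 2 ≤ m i
  m_le_half_k : ∀ i, m i ≤ k i / 2
  ends_zero : ends 0 = {0}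
  card_off : ∀ n, (off (n + 1)).card = m (n + 1)
  off_zero : ∀ n, (0 : ℝ) ∈ off (n + 1)
  off_last : ∀ n,
    (∏ i ∈ Finset.range n, (k (i + 1) : ℝ))⁻¹ -
      (∏ i ∈ Finset.range (n + 1), (k (i + 1) : ℝ))⁻¹ ∈ off (n + 1)
  off_mult : ∀ n, ∀ o ∈ off (n + 1), ∃ r : ℕ,
    (r : ℝ) * (∏ i ∈ Finset.range (n + 1), (k (i + 1) : ℝ))⁻¹ = o ∧ r + 1 ≤ k (n + 1)
  off_sep : ∀ n, ∀ o ∈ off (n + 1), ∀ o' ∈ off (n + 1), o ≠ o' →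
    2 * (∏ i ∈ Finset.range (n + 1), (k (i + 1) : ℝ))⁻¹ ≤ |o - o'|
  ends_succ : ∀ n, (ends (n + 1) : Set ℝ) =
    {z : ℝ | ∃ b ∈ ends n, ∃ o ∈ off (n + 1), z = b + o}

namespace QSCantor

/-- Length `1/(k₁⋯kₙ)` of the stage-`n` intervals. -/
noncomputable def len (C : QSCantor) (n : ℕ) : ℝ :=
  (∏ i ∈ Finset.range n, (C.k (i + 1) : ℝ))⁻¹

/-- The product `m₁⋯mₙ`. -/
def prodM (C : QSCantor) (n : ℕ) : ℕ := ∏ i ∈ Finset.range n, C.m (i + 1)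

/-- The `n`-th stage `Aₙ` of the construction: a union of `m₁⋯mₙ` closed intervals. -/
noncomputable def stage (C : QSCantor) (n : ℕ) : Set ℝ :=
  ⋃ a ∈ C.ends n, Set.Icc a (a + C.len n)

/-- The quasi-similar Cantor set `𝒞 = ⋂ₙ Aₙ`. -/
noncomputable def cantorSet (C : QSCantor) : Set ℝ := ⋂ n, C.stage n

/-- The approximating absolutely continuous function `fₙ`: `fₙ(0) = 0`, `fₙ' = 0` off
`Aₙ` and `fₙ' = (k₁⋯kₙ)/(m₁⋯mₙ)` on `Aₙ`; equivalently
`fₙ(x) = (k₁⋯kₙ)/(m₁⋯mₙ) · λ(Aₙ ∩ [0,x])`. -/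
noncomputable def fseq (C : QSCantor) (n : ℕ) (x : ℝ) : ℝ :=
  ((∏ i ∈ Finset.range n, (C.k (i + 1) : ℝ)) / (C.prodM n : ℝ)) *
    (volume (C.stage n ∩ Set.Icc 0 x)).toReal

/-- The associated singular function `f_s = lim fₙ`. -/
noncomputable def fs (C : QSCantor) (x : ℝ) : ℝ :=
  Filter.limUnder Filter.atTop (fun n => C.fseq n x)

end QSCantor

open Set Filter Topology

theorem Finset.sum_le_of_eq_zero_off_subsingleton {ι M : Type*} [AddCommMonoid M] [LE M]
    {s : Finset ι} {f : ι → M} {B : M} (p : ι → Prop)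
    (hp : ∀ i ∈ s, ∀ j ∈ s, p i → p j → i = j) (hf : ∀ i ∈ s, ¬ p i → f i = 0)
    (hfB : ∀ i ∈ s, f i ≤ B) (hB : 0 ≤ B) : ∑ i ∈ s, f i ≤ B := by
  by_cases h : ∃ i ∈ s, p i
  · obtain ⟨i, hi, hpi⟩ := h
    rw [Finset.sum_eq_single_of_mem i hi fun j hj hji =>
      hf j hj fun hpj => hji (hp j hj i hi hpj hpi)]
    exact hfB i hi
  · simp only [not_exists, not_and] at h
    rwa [Finset.sum_eq_zero fun i hi => hf i hi (h i hi)]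

namespace QSCantor

variable (C : QSCantor) {n N : ℕ} {a b o x y : ℝ}

lemma k_pos (i : ℕ) : 0 < C.k i := by
  have := C.two_le_m i
  have := C.m_le_half_k i
  omega

lemma len_pos (n : ℕ) : 0 < C.len n :=
  inv_pos.2 (Finset.prod_pos fun i _ => Nat.cast_pos.2 (C.k_pos (i + 1)))

lemma k_mul_len_succ (n : ℕ) : (C.k (n + 1) : ℝ) * C.len (n + 1) = C.len n := by
  have := C.len_pos n
  have := (Nat.cast_pos (α := ℝ)).2 (C.k_pos (n + 1))
  simp only [len, Finset.prod_range_succ, mul_inv] at *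
  field_simp

lemma prodM_pos (n : ℕ) : 0 < C.prodM n :=
  Finset.prod_pos fun i _ => by have := C.two_le_m (i + 1); omega

lemma prodM_succ (n : ℕ) : C.prodM (n + 1) = C.prodM n * C.m (n + 1) :=
  Finset.prod_range_succ _ n

lemma two_pow_le_prodM (n : ℕ) : 2 ^ n ≤ C.prodM n := by
  simpa [prodM] using Finset.pow_card_le_prod (Finset.range n) _ 2 fun i _ => C.two_le_m (i + 1)

variable {C}

lemma off_nonneg (ho : o ∈ C.off (n + 1)) : 0 ≤ o := by
  obtain ⟨r, hr, -⟩ := C.off_mult n o ho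
  rw [← hr]
  exact mul_nonneg r.cast_nonneg (C.len_pos (n + 1)).le

lemma off_add_len_le (ho : o ∈ C.off (n + 1)) : o + C.len (n + 1) ≤ C.len n := by
  obtain ⟨r, hr, hrk⟩ := C.off_mult n o ho
  change (r : ℝ) * C.len (n + 1) = o at hr
  rw [← hr, ← C.k_mul_len_succ n]
  nlinarith [C.len_pos (n + 1), (Nat.cast_le (α := ℝ)).2 hrk, Nat.cast_succ (R := ℝ) r]

variable (C) in
lemma len_succ_le (n : ℕ) : C.len (n + 1) ≤ C.len n := by
  simpa using off_add_len_le (C.off_zero n)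

lemma mem_ends_succ : a ∈ C.ends (n + 1) ↔ ∃ b ∈ C.ends n, ∃ o ∈ C.off (n + 1), a = b + o := by
  rw [← Finset.mem_coe, C.ends_succ n]; rfl

lemma ends_nonneg (ha : a ∈ C.ends n) : 0 ≤ a := by
  induction n generalizing a with
  | zero => simp_all [C.ends_zero]
  | succ n ih =>
    obtain ⟨b, hb, o, ho, rfl⟩ := mem_ends_succ.1 ha
    exact add_nonneg (ih hb) (off_nonneg ho)

lemma ends_add_two_len_le (ha : a ∈ C.ends n) (hb : b ∈ C.ends n) (hab : a < b) :
    a + 2 * C.len n ≤ b := by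
  induction n generalizing a b with
  | zero => simp_all [C.ends_zero]
  | succ n ih =>
    obtain ⟨a₀, ha₀, o, ho, rfl⟩ := mem_ends_succ.1 ha
    obtain ⟨b₀, hb₀, o', ho', rfl⟩ := mem_ends_succ.1 hb
    have := off_nonneg ho
    have := off_nonneg ho'
    have := off_add_len_le ho
    have := off_add_len_le ho'
    have := C.len_succ_le n
    have := C.len_pos (n + 1)
    rcases lt_trichotomy a₀ b₀ with h | rfl | h
    · linarith [ih ha₀ hb₀ h]
    · have hsep := C.off_sep n o ho o' ho' (by rintro rfl; exact lt_irrefl _ hab)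
      rw [abs_sub_comm, abs_of_pos (by linarith)] at hsep
      change 2 * C.len (n + 1) ≤ o' - o at hsep
      linarith
    · linarith [ih hb₀ ha₀ h]

lemma disjoint_Icc_of_mem_ends (ha : a ∈ C.ends n) (hb : b ∈ C.ends n) (hab : a ≠ b) :
    Disjoint (Icc a (a + C.len n)) (Icc b (b + C.len n)) := by
  have := C.len_pos n
  rcases hab.lt_or_gt with h | h
  · have := ends_add_two_len_le ha hb h
    exact disjoint_left.2 fun z hz hz' => by linarith [hz.2, hz'.1]
  · have := ends_add_two_len_le hb ha h
    exact disjoint_left.2 fun z hz hz' => by linarith [hz.1, hz'.2]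

/-- Since the gaps of `Aₙ` are at least `1/(k₁⋯kₙ)` long, an interval of that length meets the
interior of at most one interval of `Aₙ`. -/
lemma eq_of_mem_ends_of_overlap (ha : a ∈ C.ends n) (hb : b ∈ C.ends n) (h : y - x ≤ C.len n)
    (hxa : x < a + C.len n ∧ a < y) (hxb : x < b + C.len n ∧ b < y) : a = b := by
  by_contra hab
  rcases lt_or_gt_of_ne hab with hlt | hlt
  · linarith [ends_add_two_len_le ha hb hlt]
  · linarith [ends_add_two_len_le hb ha hlt]

lemma Icc_subset_stage (ha : a ∈ C.ends n) : Icc a (a + C.len n) ⊆ C.stage n :=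
  subset_biUnion_of_mem (u := fun a => Icc a (a + C.len n)) ha

lemma Icc_off_subset_Icc (ho : o ∈ C.off (n + 1)) :
    Icc (a + o) (a + o + C.len (n + 1)) ⊆ Icc a (a + C.len n) :=
  Icc_subset_Icc (by linarith [off_nonneg ho]) (by linarith [off_add_len_le ho])

variable (C)

lemma stage_antitone : Antitone C.stage :=
  antitone_nat_of_succ_le fun n => iUnion₂_subset fun a ha => by
    obtain ⟨b, hb, o, ho, rfl⟩ := mem_ends_succ.1 ha
    exact (Icc_off_subset_Icc ho).trans (Icc_subset_stage hb)

lemma isCompact_stage (n : ℕ) : IsCompact (C.stage n) :=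
  (C.ends n).finite_toSet.isCompact_biUnion fun _ _ => isCompact_Icc

lemma measurableSet_stage (n : ℕ) : MeasurableSet (C.stage n) :=
  (C.isCompact_stage n).measurableSet

variable {C}

lemma stage_succ_inter_Icc_subset (ha : a ∈ C.ends n) :
    C.stage (n + 1) ∩ Icc a (a + C.len n) ⊆
      ⋃ o ∈ C.off (n + 1), Icc (a + o) (a + o + C.len (n + 1)) := by
  rintro z ⟨hz, hza⟩
  obtain ⟨a', ha', hza'⟩ := mem_iUnion₂.1 hz
  obtain ⟨b, hb, o, ho, rfl⟩ := mem_ends_succ.1 ha'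
  obtain rfl : b = a := by
    by_contra hba
    exact disjoint_left.1 (disjoint_Icc_of_mem_ends hb ha hba) (Icc_off_subset_Icc ho hza') hza
  exact mem_biUnion ho hza'

variable (C)

/-- The measure `μ_N` whose distribution function on `[0, ∞)` is `f_N`. -/
noncomputable def stageMeasure (N : ℕ) : Measure ℝ :=
  ENNReal.ofReal ((∏ i ∈ Finset.range N, (C.k (i + 1) : ℝ)) / C.prodM N) •
    volume.restrict (C.stage N)

instance (N : ℕ) : IsFiniteMeasure (C.stageMeasure N) :=
  haveI := isFiniteMeasure_restrict.2 ((C.isCompact_stage N).measure_lt_top (μ := volume)).ne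
  Measure.smul_finite _ ENNReal.ofReal_ne_top

lemma fseq_eq_stageMeasure_real (N : ℕ) (t : ℝ) :
    C.fseq N t = (C.stageMeasure N).real (Icc 0 t) := by
  rw [fseq, stageMeasure, measureReal_def, Measure.smul_apply,
    Measure.restrict_apply measurableSet_Icc, inter_comm, smul_eq_mul, ENNReal.toReal_mul,
    ENNReal.toReal_ofReal (div_nonneg (Finset.prod_nonneg fun i _ => Nat.cast_nonneg _)
      (Nat.cast_nonneg _))]

variable {C}

lemma stageMeasure_real_singleton (N : ℕ) (a : ℝ) : (C.stageMeasure N).real {a} = 0 := by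
  simp [stageMeasure, measureReal_def]

lemma stageMeasure_compl_stage (h : n ≤ N) : C.stageMeasure N (C.stage n)ᶜ = 0 := by
  rw [stageMeasure, Measure.smul_apply, Measure.restrict_apply (C.measurableSet_stage n).compl,
    ← sdiff_eq_compl_inter, sdiff_eq_empty.2 (C.stage_antitone h)]
  simp

lemma stageMeasure_real_Icc (h : n ≤ N) (ha : a ∈ C.ends n) :
    (C.stageMeasure N).real (Icc a (a + C.len n)) = ((C.prodM n : ℝ))⁻¹ := by
  induction h using Nat.decreasingInduction generalizing a with
  | self =>
    have hlen := C.len_pos N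
    have hM : (C.prodM N : ℝ) ≠ 0 := Nat.cast_ne_zero.2 (C.prodM_pos N).ne'
    rw [stageMeasure, measureReal_def, Measure.smul_apply, Measure.restrict_apply
      measurableSet_Icc, inter_eq_left.2 (Icc_subset_stage ha), Real.volume_Icc, smul_eq_mul,
      ENNReal.toReal_mul, ENNReal.toReal_ofReal (by positivity), ENNReal.toReal_ofReal
      (by linarith), add_sub_cancel_left, ← inv_inv (∏ i ∈ _, _), ← len]
    field_simp
  | of_succ n hn ih =>
    have hunion : (C.stageMeasure N).real (Icc a (a + C.len n)) =
        (C.stageMeasure N).real (⋃ o ∈ C.off (n + 1), Icc (a + o) (a + o + C.len (n + 1))) := by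
      refine le_antisymm ?_ (measureReal_mono (iUnion₂_subset fun o ho => Icc_off_subset_Icc ho))
      rw [measureReal_def, ← measure_inter_conull (stageMeasure_compl_stage hn), inter_comm,
        ← measureReal_def]
      exact measureReal_mono (stage_succ_inter_Icc_subset ha) (measure_ne_top _ _)
    have hchild : ∀ o ∈ C.off (n + 1), a + o ∈ C.ends (n + 1) := fun o ho =>
      mem_ends_succ.2 ⟨a, ha, o, ho, rfl⟩
    rw [hunion, measureReal_biUnion_finset
      (fun o ho o' ho' hne => disjoint_Icc_of_mem_ends (hchild o ho) (hchild o' ho')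
        fun h => hne (add_left_cancel h))
      fun _ _ => measurableSet_Icc, Finset.sum_congr rfl fun o ho => ih (hchild o ho),
      Finset.sum_const, C.card_off, nsmul_eq_mul, C.prodM_succ]
    have := C.prodM_pos n
    have := C.two_le_m (n + 1)
    push_cast
    field_simp

lemma stageMeasure_real_eq_sum (h : n ≤ N) {S : Set ℝ} (hS : MeasurableSet S) :
    (C.stageMeasure N).real S =
      ∑ a ∈ C.ends n, (C.stageMeasure N).real (S ∩ Icc a (a + C.len n)) := by
  rw [measureReal_def, ← measure_inter_conull (stageMeasure_compl_stage h), ← measureReal_def,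
    stage, inter_iUnion₂, measureReal_biUnion_finset
      (fun a ha b hb hab => (disjoint_Icc_of_mem_ends ha hb hab).mono inter_subset_right
        inter_subset_right)
      fun _ _ => hS.inter measurableSet_Icc]

lemma stageMeasure_real_inter_Icc_le (h : n ≤ N) (ha : a ∈ C.ends n) (S : Set ℝ) :
    (C.stageMeasure N).real (S ∩ Icc a (a + C.len n)) ≤ ((C.prodM n : ℝ))⁻¹ :=
  (measureReal_mono inter_subset_right).trans_eq (stageMeasure_real_Icc h ha)

lemma stageMeasure_real_Ioc_le (hnN : n ≤ N) (h : y - x ≤ C.len n) :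
    (C.stageMeasure N).real (Ioc x y) ≤ ((C.prodM n : ℝ))⁻¹ := by
  rw [stageMeasure_real_eq_sum hnN measurableSet_Ioc]
  refine Finset.sum_le_of_eq_zero_off_subsingleton (fun a => x < a + C.len n ∧ a < y)
    (fun a ha b hb => eq_of_mem_ends_of_overlap ha hb h) (fun a _ hfar => ?_)
    (fun a ha => stageMeasure_real_inter_Icc_le hnN ha _) (by positivity)
  refine measureReal_mono_null (s₂ := {a}) ?_ (stageMeasure_real_singleton N a)
  rintro z ⟨⟨hxz, hzy⟩, haz, hza⟩
  rcases not_and_or.1 hfar with hfar | hfar <;> simp only [not_lt] at hfar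
  · linarith
  · exact le_antisymm (hzy.trans hfar) haz

lemma fseq_sub_fseq_le (hnN : n ≤ N) (h : y - x ≤ C.len n) :
    C.fseq N y - C.fseq N x ≤ ((C.prodM n : ℝ))⁻¹ := by
  have hsplit : Icc 0 y ⊆ Icc 0 x ∪ Ioc x y := fun z hz =>
    (le_or_gt z x).imp (fun hzx => ⟨hz.1, hzx⟩) fun hxz => ⟨hxz, hz.2⟩
  rw [C.fseq_eq_stageMeasure_real, C.fseq_eq_stageMeasure_real]
  linarith [measureReal_mono (μ := C.stageMeasure N) hsplit, measureReal_union_le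
    (μ := C.stageMeasure N) (Icc 0 x) (Ioc x y), stageMeasure_real_Ioc_le hnN h]

/-- `f_N` and `f_{N+1}` give the same mass `1/(m₁⋯m_N)` to every interval of `A_N`, so they
differ only inside the one interval of `A_N` containing `t` in its interior. -/
lemma abs_fseq_sub_fseq_succ_le (N : ℕ) (t : ℝ) :
    |C.fseq N t - C.fseq (N + 1) t| ≤ ((C.prodM N : ℝ))⁻¹ := by
  rw [C.fseq_eq_stageMeasure_real, C.fseq_eq_stageMeasure_real,
    stageMeasure_real_eq_sum le_rfl measurableSet_Icc,
    stageMeasure_real_eq_sum N.le_succ measurableSet_Icc, ← Finset.sum_sub_distrib]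
  refine (Finset.abs_sum_le_sum_abs _ _).trans <|
    Finset.sum_le_of_eq_zero_off_subsingleton (fun a => t < a + C.len N ∧ a < t)
      (fun a ha b hb => eq_of_mem_ends_of_overlap ha hb (by simp [(C.len_pos N).le]))
      (fun a ha hfar => ?_)
      (fun a ha => abs_sub_le_of_nonneg_of_le measureReal_nonneg
        (stageMeasure_real_inter_Icc_le le_rfl ha _) measureReal_nonneg
        (stageMeasure_real_inter_Icc_le N.le_succ ha _))
      (by positivity)
  rw [abs_eq_zero, sub_eq_zero]
  rcases not_and_or.1 hfar with hfar | hfar <;> simp only [not_lt] at hfar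
  · rw [inter_eq_right.2 (Icc_subset_Icc (ends_nonneg ha) hfar),
      stageMeasure_real_Icc le_rfl ha, stageMeasure_real_Icc N.le_succ ha]
  · have hsub : Icc 0 t ∩ Icc a (a + C.len N) ⊆ {a} := fun z hz =>
      le_antisymm (hz.1.2.trans hfar) hz.2.1
    rw [measureReal_mono_null hsub (stageMeasure_real_singleton N a),
      measureReal_mono_null hsub (stageMeasure_real_singleton (N + 1) a)]

variable (C)

lemma tendsto_fseq_fs (t : ℝ) : Tendsto (fun N => C.fseq N t) atTop (𝓝 (C.fs t)) := by
  refine CauchySeq.tendsto_limUnder <| cauchySeq_of_le_geometric 2⁻¹ 1 (by norm_num) fun N => ?_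
  rw [Real.dist_eq, one_mul, inv_pow]
  exact (abs_fseq_sub_fseq_succ_le N t).trans <|
    inv_anti₀ (by positivity) (by exact_mod_cast C.two_pow_le_prodM N)

end QSCantor

theorem stmt15_general (C : QSCantor) (x y : ℝ) (n : ℕ) (h : y - x ≤ C.len n) :
    C.fs y - C.fs x ≤ ((C.prodM n : ℝ))⁻¹ :=
  le_of_tendsto ((C.tendsto_fseq_fs y).sub (C.tendsto_fseq_fs x))
    (eventually_atTop.2 ⟨n, fun _ hN => QSCantor.fseq_sub_fseq_le hN h⟩)

/-- For `x < y` in `[0,1)` with `y - x ≤ 1/(k₁⋯kₙ)`, the associated singular function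
satisfies `f_s(y) - f_s(x) ≤ 1/(m₁⋯mₙ)`. -/
theorem stmt15 (C : QSCantor) (x y : ℝ) (hx : 0 ≤ x) (hxy : x < y) (hy : y < 1)
    (n : ℕ) (h : y - x ≤ C.len n) :
    C.fs y - C.fs x ≤ ((C.prodM n : ℝ))⁻¹ :=
  stmt15_general C x y n h
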